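/- Let K be an invertible n×n matrix over a field, let x_1, ..., x_k be distinct indices and y_1, ..., y_k be distinct indices in {1,...,n}. Then \sum_{\sigma \in S_n} \left(\prod_{i=1}^k \mathbf{1}\{\sigma(x_i) = y_i\}\right) \operatorname{sgn}(\sigma) \prod_{x=1}^n K_{x, \sigma(x)} = \left(\prod_{i=1}^k K_{x_i, y_i}\right) \det(K) \det_{i,j=1}^k (K^{-1}_{y_i, x_j}). -/

import Mathlib

/-!
Let `B` (`updateColsSingle K x y`) be `K` with column `y i` replaced by the basis vector `e_{x i}`
for every `i`. In the permutation expansion of `det B` a permutation survives only if it sends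
every `x i` to `y i`, and its term is then that of `det K` with the factors `K_{x i, y i}`
replaced by `1`. On the other hand `K⁻¹ * B` is the identity outside the columns `y i`, and its
column `y i` is the column `x i` of `K⁻¹`, so `det B = det K * det (K⁻¹ * B)` is `det K` times
the minor of `K⁻¹` on rows `y` and columns `x`.
-/

open Equiv Finset Matrix

namespace Matrix

variable {R : Type*} [CommRing R] {n ι : Type*} [DecidableEq n] [Fintype ι]

def updateColsSingle (A : Matrix n n R) (x y : ι → n) : Matrix n n R :=
  of fun j c => if ∃ i, y i = c then (if ∃ i, x i = j ∧ y i = c then 1 else 0) else A j c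

section updateColsSingle

variable (A : Matrix n n R) (x y : ι → n)

theorem updateColsSingle_apply_of_notMem_range {c : n} (hc : c ∉ Set.range y) (j : n) :
    updateColsSingle A x y j c = A j c :=
  if_neg hc

variable {y}

theorem updateColsSingle_apply_right (hy : Function.Injective y) (i : ι) (j : n) :
    updateColsSingle A x y j (y i) = if x i = j then 1 else 0 := by
  have hx : (∃ i', x i' = j ∧ y i' = y i) ↔ x i = j :=
    ⟨fun ⟨_, hj, hi'⟩ => hy hi' ▸ hj, fun hj => ⟨i, hj, rfl⟩⟩
  simp only [updateColsSingle, of_apply, exists_apply_eq_apply, if_true, hx]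

variable [Fintype n]

theorem mul_updateColsSingle_apply_right (M : Matrix n n R) (hy : Function.Injective y)
    (j : n) (i : ι) : (M * updateColsSingle A x y) j (y i) = M j (x i) := by
  simp [mul_apply, updateColsSingle_apply_right A x hy]

theorem mul_updateColsSingle_apply_of_notMem_range (M : Matrix n n R) {c : n}
    (hc : c ∉ Set.range y) (j : n) :
    (M * updateColsSingle A x y) j c = (M * A) j c := by
  simp only [mul_apply, updateColsSingle_apply_of_notMem_range A x y hc]

variable {x}

theorem prod_ite_mul_prod_eq_prod_mul_prod_updateColsSingle (hx : Function.Injective x)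
    (hy : Function.Injective y) (σ : Perm n) :
    (∏ i, if σ (x i) = y i then (1 : R) else 0) * ∏ j, A j (σ j)
      = (∏ i, A (x i) (y i)) * ∏ j, updateColsSingle A x y j (σ j) := by
  by_cases hσ : ∀ i, σ (x i) = y i
  · set s := univ.map ⟨x, hx⟩
    have hA : ∏ j ∈ s, A j (σ j) = ∏ i, A (x i) (y i) := by simp [s, hσ]
    have hB : ∏ j ∈ s, updateColsSingle A x y j (σ j) = 1 := by
      simp [s, hσ, updateColsSingle_apply_right A x hy]
    have hBc : ∏ j ∈ sᶜ, updateColsSingle A x y j (σ j) = ∏ j ∈ sᶜ, A j (σ j) := by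
      refine prod_congr rfl fun j hj => updateColsSingle_apply_of_notMem_range A x y ?_ j
      rintro ⟨i, hi⟩
      rw [← hσ i] at hi
      exact mem_compl.1 hj (by simpa [s] using ⟨i, σ.injective hi⟩)
    rw [← prod_mul_prod_compl s, ← prod_mul_prod_compl s, hA, hB, hBc]
    simp [hσ]
  · push Not at hσ
    obtain ⟨i, hi⟩ := hσ
    have hB : updateColsSingle A x y (σ.symm (y i)) (σ (σ.symm (y i))) = 0 := by
      rw [apply_symm_apply, updateColsSingle_apply_right A x hy, if_neg]
      rintro h
      exact hi (h ▸ apply_symm_apply σ _)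
    rw [prod_eq_zero (mem_univ i) (if_neg hi),
      prod_eq_zero (f := fun j => updateColsSingle A x y j (σ j)) (mem_univ _) hB, zero_mul,
      mul_zero]

theorem sum_perm_ite_mul_sign_mul_prod_eq_prod_mul_det_updateColsSingle
    (hx : Function.Injective x) (hy : Function.Injective y) :
    ∑ σ : Perm n, (∏ i, if σ (x i) = y i then (1 : R) else 0) * (Perm.sign σ : R) *
        ∏ j, A j (σ j)
      = (∏ i, A (x i) (y i)) * (updateColsSingle A x y).det := by
  rw [← det_transpose, det_apply', mul_sum]
  refine sum_congr rfl fun σ _ => ?_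
  rw [mul_right_comm, prod_ite_mul_prod_eq_prod_mul_prod_updateColsSingle A hx hy]
  simp only [transpose_apply]
  ring

end updateColsSingle

theorem det_eq_det_submatrix_of_apply_eq_one_apply [Fintype n] [DecidableEq ι]
    {C : Matrix n n R} {y : ι → n} (hy : Function.Injective y)
    (hC : ∀ j c, c ∉ Set.range y → C j c = (1 : Matrix n n R) j c) :
    C.det = (C.submatrix y y).det := by
  have hblock : ∀ j ∈ Set.range y, ∀ c ∉ Set.range y, C j c = 0 := fun j hj c hc => by
    rw [hC j c hc, one_apply_ne]
    rintro rfl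
    exact hc hj
  have hone : toSquareBlockProp C (· ∉ Set.range y) = 1 := by
    ext j c
    simp [toSquareBlockProp_def, hC j c c.2, one_apply, Subtype.ext_iff]
  rw [twoBlockTriangular_det' C (· ∈ Set.range y) hblock, hone, det_one, mul_one]
  have hsub : C.submatrix y y = (toSquareBlockProp C (· ∈ Set.range y)).submatrix
      (Equiv.ofInjective y hy) (Equiv.ofInjective y hy) := rfl
  rw [hsub, det_submatrix_equiv_self]
  -- the two sides use different `Fintype` instances on `Set.range y`
  exact congrArg (@det _ _ · R _ _) (Subsingleton.elim _ _)

end Matrix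

/-- Jacobi's identity / generalized Cramer's rule: for an invertible matrix `K` and
pairwise distinct row indices `x₁,…,x_k` and pairwise distinct column indices `y₁,…,y_k`,
the permutation expansion of `det K` restricted to permutations sending each `xᵢ` to `yᵢ`
equals `(∏ᵢ K_{xᵢ yᵢ}) · det K · det (K⁻¹_{yᵢ xⱼ})ᵢⱼ`. -/
theorem jacobi_identity {F : Type*} [Field F] {n k : ℕ}
    (K : Matrix (Fin n) (Fin n) F) (hK : IsUnit K.det)
    (x y : Fin k → Fin n) (hx : Function.Injective x) (hy : Function.Injective y) :
    ∑ σ : Equiv.Perm (Fin n),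
        (∏ i : Fin k, if σ (x i) = y i then (1 : F) else 0) *
          ((Equiv.Perm.sign σ : ℤ) : F) * ∏ j : Fin n, K j (σ j)
      = (∏ i : Fin k, K (x i) (y i)) * K.det *
          Matrix.det (fun i j : Fin k => K⁻¹ (y i) (x j)) := by
  set B := updateColsSingle K x y
  have hC : ∀ j c, c ∉ Set.range y → (K⁻¹ * B) j c = (1 : Matrix (Fin n) (Fin n) F) j c :=
    fun j c hc => by
      rw [mul_updateColsSingle_apply_of_notMem_range K x K⁻¹ hc, nonsing_inv_mul K hK]
  have hminor : (K⁻¹ * B).submatrix y y = fun i j => K⁻¹ (y i) (x j) := by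
    ext i j
    exact mul_updateColsSingle_apply_right K x K⁻¹ hy (y i) j
  calc _ = (∏ i, K (x i) (y i)) * B.det :=
        sum_perm_ite_mul_sign_mul_prod_eq_prod_mul_det_updateColsSingle K hx hy
    _ = (∏ i, K (x i) (y i)) * (K.det * (K⁻¹ * B).det) := by
      rw [← det_mul, mul_nonsing_inv_cancel_left _ _ hK]
    _ = _ := by
      rw [det_eq_det_submatrix_of_apply_eq_one_apply hy hC, hminor, mul_assoc]
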